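/- Let J be a nondegenerate bounded interval, let ψ be such that ψ and ψ² are integrable on J, let m ∈ ℝ, and define the cut-off ψ_m(s) = min(ψ(s), m). Then ⟨ψ_m²⟩_J − (⟨ψ_m⟩_J)² ≤ ⟨ψ²⟩_J − (⟨ψ⟩_J)². Consequently, if ψ ∈ BMO_ε(I) for a nondegenerate bounded interval I and ε ≥ 0, then ψ_m ∈ BMO_ε(I). -/

import Mathlib

/-!
The mean oscillation `⟨φ²⟩_J − ⟨φ⟩_J²` is the minimum over constants `c` of `⟨(φ − c)²⟩_J`,
attained at `c = ⟨φ⟩_J`. The cut-off `x ↦ min x m` is 1-Lipschitz, so with `μ = ⟨ψ⟩_J`,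
pointwise `(ψ_m − min μ m)² ≤ (ψ − μ)²`; averaging bounds the oscillation of `ψ_m` by that of
`ψ`. Applied on every subinterval, this gives the `BMO_ε` statement.
-/

open MeasureTheory Real

/-- The average of `φ` over the interval with endpoints `a`, `b`. -/
noncomputable def avg (φ : ℝ → ℝ) (a b : ℝ) : ℝ := (∫ t in a..b, φ t) / (b - a)

/-- `φ ∈ BMO_ε([a,b])`: `φ` and `φ²` are integrable on `[a,b]` and the mean
oscillation `⟨φ²⟩_J − ⟨φ⟩_J²` is at most `ε²` on every nondegenerate
subinterval `J = [c,d] ⊆ [a,b]`. -/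
def BMOe (ε a b : ℝ) (φ : ℝ → ℝ) : Prop :=
  IntervalIntegrable φ volume a b ∧
  IntervalIntegrable (fun t => (φ t) ^ 2) volume a b ∧
  ∀ c d : ℝ, a ≤ c → c < d → d ≤ b →
    avg (fun t => (φ t) ^ 2) c d - (avg φ c d) ^ 2 ≤ ε ^ 2

noncomputable def meanOsc (φ : ℝ → ℝ) (a b : ℝ) : ℝ :=
  avg (fun t => φ t ^ 2) a b - avg φ a b ^ 2

section Average

variable {f g : ℝ → ℝ} {a b : ℝ}

lemma avg_le_avg (hab : a < b) (hf : IntervalIntegrable f volume a b)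
    (hg : IntervalIntegrable g volume a b) (h : ∀ t, f t ≤ g t) : avg f a b ≤ avg g a b :=
  div_le_div_of_nonneg_right (intervalIntegral.integral_mono hab.le hf hg h) (sub_nonneg.2 hab.le)

lemma sub_const_sq_eq (f : ℝ → ℝ) (c : ℝ) :
    (fun t => (f t - c) ^ 2) = fun t => f t ^ 2 - 2 * c * f t + c ^ 2 :=
  funext fun _ => by ring

lemma IntervalIntegrable.sub_const_sq (h1 : IntervalIntegrable f volume a b)
    (h2 : IntervalIntegrable (fun t => f t ^ 2) volume a b) (c : ℝ) :
    IntervalIntegrable (fun t => (f t - c) ^ 2) volume a b := by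
  rw [sub_const_sq_eq]
  exact (h2.sub (h1.const_mul _)).add intervalIntegrable_const

lemma avg_sub_const_sq (hab : a ≠ b) (h1 : IntervalIntegrable f volume a b)
    (h2 : IntervalIntegrable (fun t => f t ^ 2) volume a b) (c : ℝ) :
    avg (fun t => (f t - c) ^ 2) a b = avg (fun t => f t ^ 2) a b - 2 * c * avg f a b + c ^ 2 := by
  have h2c : IntervalIntegrable (fun t => 2 * c * f t) volume a b := h1.const_mul _
  have hba : b - a ≠ 0 := sub_ne_zero.2 hab.symm
  rw [avg, avg, avg, sub_const_sq_eq,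
    intervalIntegral.integral_add (h2.sub h2c) intervalIntegrable_const,
    intervalIntegral.integral_sub h2 h2c, intervalIntegral.integral_const_mul,
    intervalIntegral.integral_const]
  field_simp
  ring

lemma meanOsc_eq_avg_sub_avg_sq (hab : a ≠ b) (h1 : IntervalIntegrable f volume a b)
    (h2 : IntervalIntegrable (fun t => f t ^ 2) volume a b) :
    meanOsc f a b = avg (fun t => (f t - avg f a b) ^ 2) a b := by
  rw [avg_sub_const_sq hab h1 h2, meanOsc]
  ring

lemma meanOsc_le_avg_sub_const_sq (hab : a ≠ b) (h1 : IntervalIntegrable f volume a b)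
    (h2 : IntervalIntegrable (fun t => f t ^ 2) volume a b) (c : ℝ) :
    meanOsc f a b ≤ avg (fun t => (f t - c) ^ 2) a b := by
  rw [avg_sub_const_sq hab h1 h2, meanOsc]
  nlinarith [sq_nonneg (avg f a b - c)]

end Average

namespace LipschitzWith

variable {K : NNReal} {φ f : ℝ → ℝ} {a b : ℝ}

lemma abs_apply_le (hφ : LipschitzWith K φ) (x : ℝ) : |φ x| ≤ |φ 0| + K * |x| := by
  have := hφ.dist_le_mul x 0
  rw [Real.dist_eq, Real.dist_eq, sub_zero] at this
  linarith [abs_sub_abs_le_abs_sub (φ x) (φ 0)]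

lemma sq_apply_le (hφ : LipschitzWith K φ) (x : ℝ) :
    φ x ^ 2 ≤ 2 * φ 0 ^ 2 + 2 * K ^ 2 * x ^ 2 := by
  have hφx : φ x ^ 2 ≤ (|φ 0| + K * |x|) ^ 2 :=
    sq_le_sq.2 ((hφ.abs_apply_le x).trans (le_abs_self _))
  nlinarith [sq_abs (φ 0), sq_abs x, sq_nonneg (|φ 0| - K * |x|)]

lemma intervalIntegrable_comp (hφ : LipschitzWith K φ) (hf : IntervalIntegrable f volume a b) :
    IntervalIntegrable (fun t => φ (f t)) volume a b :=
  (intervalIntegrable_const.add (hf.abs.const_mul K)).mono_fun'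
    (hφ.continuous.comp_aestronglyMeasurable hf.def'.aestronglyMeasurable)
    (ae_of_all _ fun t => hφ.abs_apply_le (f t))

lemma intervalIntegrable_comp_sq (hφ : LipschitzWith K φ) (h1 : IntervalIntegrable f volume a b)
    (h2 : IntervalIntegrable (fun t => f t ^ 2) volume a b) :
    IntervalIntegrable (fun t => φ (f t) ^ 2) volume a b :=
  (intervalIntegrable_const.add (h2.const_mul (2 * K ^ 2))).mono_fun'
    ((hφ.continuous.comp_aestronglyMeasurable h1.def'.aestronglyMeasurable).pow 2)
    (ae_of_all _ fun t => by
      simpa only [Real.norm_eq_abs, abs_pow, sq_abs, mul_assoc] using hφ.sq_apply_le (f t))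

lemma sub_sq_le (hφ : LipschitzWith 1 φ) (x y : ℝ) : (φ x - φ y) ^ 2 ≤ (x - y) ^ 2 :=
  sq_le_sq.2 (by simpa [Real.dist_eq] using hφ.dist_le_mul x y)

lemma meanOsc_comp_le (hφ : LipschitzWith 1 φ) (hab : a < b)
    (h1 : IntervalIntegrable f volume a b)
    (h2 : IntervalIntegrable (fun t => f t ^ 2) volume a b) :
    meanOsc (fun t => φ (f t)) a b ≤ meanOsc f a b := by
  set μ := avg f a b
  calc meanOsc (fun t => φ (f t)) a b ≤ avg (fun t => (φ (f t) - φ μ) ^ 2) a b :=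
        meanOsc_le_avg_sub_const_sq hab.ne (hφ.intervalIntegrable_comp h1)
          (hφ.intervalIntegrable_comp_sq h1 h2) _
    _ ≤ avg (fun t => (f t - μ) ^ 2) a b :=
        avg_le_avg hab ((hφ.intervalIntegrable_comp h1).sub_const_sq
          (hφ.intervalIntegrable_comp_sq h1 h2) _) (h1.sub_const_sq h2 _)
          fun t => hφ.sub_sq_le _ _
    _ = meanOsc f a b := (meanOsc_eq_avg_sub_avg_sq hab.ne h1 h2).symm

end LipschitzWith

lemma BMOe.comp_lipschitzWith {ε a b : ℝ} {φ ψ : ℝ → ℝ} (hψ : BMOe ε a b ψ)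
    (hφ : LipschitzWith 1 φ) : BMOe ε a b (fun t => φ (ψ t)) := by
  obtain ⟨h1, h2, hosc⟩ := hψ
  refine ⟨hφ.intervalIntegrable_comp h1, hφ.intervalIntegrable_comp_sq h1 h2,
    fun c d hac hcd hdb => ?_⟩
  have hsub : Set.uIcc c d ⊆ Set.uIcc a b := by
    rw [Set.uIcc_of_lt hcd, Set.uIcc_of_le (hac.trans (hcd.le.trans hdb))]
    exact Set.Icc_subset_Icc hac hdb
  exact (hφ.meanOsc_comp_le hcd (h1.mono_set hsub) (h2.mono_set hsub)).trans
    (hosc c d hac hcd hdb)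

/-- Cut-offs decrease mean oscillation: `ψ_m = min(ψ, m)` has smaller variance
over any interval, and consequently cut-offs preserve membership in `BMO_ε`. -/
theorem stmt12 (m : ℝ) :
    (∀ a b : ℝ, a < b → ∀ ψ : ℝ → ℝ,
      IntervalIntegrable ψ volume a b →
      IntervalIntegrable (fun t => (ψ t) ^ 2) volume a b →
      avg (fun t => (min (ψ t) m) ^ 2) a b - (avg (fun t => min (ψ t) m) a b) ^ 2 ≤
        avg (fun t => (ψ t) ^ 2) a b - (avg ψ a b) ^ 2) ∧
    (∀ ε : ℝ, 0 ≤ ε → ∀ A B : ℝ, A < B → ∀ ψ : ℝ → ℝ,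
      BMOe ε A B ψ → BMOe ε A B (fun s => min (ψ s) m)) := by
  have hmin : LipschitzWith 1 fun x : ℝ => min x m := LipschitzWith.id.min_const m
  exact ⟨fun a b hab ψ h1 h2 => hmin.meanOsc_comp_le hab h1 h2,
    fun ε _ A B _ ψ hψ => hψ.comp_lipschitzWith hmin⟩
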